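/- Let K be a field and X ⊆ K a subset. Then either S = {(y − y')/(x' − x) : x, y, x', y' ∈ X, x ≠ x'} equals all of K, or there exists a ∈ K such that the map (x, y) ↦ a·x + y is injective on X × X. -/

import Mathlib

section

variable {K : Type*} [Field K]

def differenceQuotients (X : Set K) : Set K :=
  {s | ∃ x ∈ X, ∃ y ∈ X, ∃ x' ∈ X, ∃ y' ∈ X, x ≠ x' ∧ s = (y - y') / (x' - x)}

theorem eq_div_sub_of_mul_add_eq {a x y x' y' : K} (hx : x ≠ x')
    (h : a * x + y = a * x' + y') : a = (y - y') / (x' - x) := by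
  rw [eq_div_iff (sub_ne_zero.mpr hx.symm)]
  linear_combination -h

theorem injOn_mul_add_of_notMem_differenceQuotients {X : Set K} {a : K}
    (ha : a ∉ differenceQuotients X) :
    Set.InjOn (fun z : K × K => a * z.1 + z.2) (X ×ˢ X) := by
  rintro ⟨x, y⟩ ⟨hx, hy⟩ ⟨x', y'⟩ ⟨hx', hy'⟩ (h : a * x + y = a * x' + y')
  obtain rfl | hne := eq_or_ne x x'
  · rw [add_left_cancel h]
  · exact (ha ⟨x, hx, y, hy, x', hx', y', hy', hne, eq_div_sub_of_mul_add_eq hne h⟩).elim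

end

theorem stmt3 (K : Type*) [Field K] (X : Set K) :
    {s : K | ∃ x ∈ X, ∃ y ∈ X, ∃ x' ∈ X, ∃ y' ∈ X, x ≠ x' ∧ s = (y - y') / (x' - x)}
      = Set.univ ∨
    ∃ a : K, Set.InjOn (fun z : K × K => a * z.1 + z.2) (X ×ˢ X) := by
  refine (em (differenceQuotients X = Set.univ)).imp id fun hS => ?_
  obtain ⟨a, ha⟩ := (Set.ne_univ_iff_exists_notMem _).mp hS
  exact ⟨a, injOn_mul_add_of_notMem_differenceQuotients ha⟩
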